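/- arXiv:1710.03198 — 3 statements merged into one kernel-verified Lean document; each statement's English description precedes it below -/
import Mathlib

section
/- Let A be a type equipped with a Mal'tsev operation p, and let R and S be two equivalence relations on A that are both compatible with p. Then the relational composites commute: for all x, z in A, (∃ y, S x y ∧ R y z) if and only if (∃ y, R x y ∧ S y z). -/
/-- A Mal'tsev operation on a type `A` is a ternary map `p` satisfying
`p x y y = x` and `p y y x = x`. -/
def IsMaltsevOp {A : Type*} (p : A → A → A → A) : Prop :=
  (∀ x y : A, p x y y = x) ∧ (∀ x y : A, p y y x = x)

/-- A binary relation `R` on `A` is compatible with a Mal'tsev operation `p`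
if it is closed under applying `p` componentwise. -/
def MaltsevCompat {A : Type*} (p : A → A → A → A) (R : A → A → Prop) : Prop :=
  ∀ a a' a'' b b' b'', R a b → R a' b' → R a'' b'' → R (p a a' a'') (p b b' b'')

namespace IsMaltsevOp

variable {A : Type*} {p : A → A → A → A} {R : A → A → Prop}

theorem rel_apply_left (hp : IsMaltsevOp p) (hR : ∀ a, R a a) (hRp : MaltsevCompat p R)
    (x : A) {y z : A} (hyz : R y z) : R x (p x y z) := by
  simpa only [hp.1] using hRp x y y x y z (hR x) (hR y) hyz

theorem rel_apply_right (hp : IsMaltsevOp p) (hR : ∀ a, R a a) (hRp : MaltsevCompat p R)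
    {x y : A} (z : A) (hxy : R x y) : R (p x y z) z := by
  simpa only [hp.2] using hRp x y z y y z hxy (hR y) (hR z)

theorem relationComp_le (hp : IsMaltsevOp p) {S : A → A → Prop} (hR : ∀ a, R a a)
    (hS : ∀ a, S a a) (hRp : MaltsevCompat p R) (hSp : MaltsevCompat p S) :
    Relation.Comp S R ≤ Relation.Comp R S := by
  rintro x z ⟨y, hxy, hyz⟩
  exact ⟨p x y z, hp.rel_apply_left hR hRp x hyz, hp.rel_apply_right hS hSp z hxy⟩

end IsMaltsevOp

/-- Two equivalence relations compatible with a Mal'tsev operation commute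
under relational composition. -/
theorem stmt_2 {A : Type*} (p : A → A → A → A) (hp : IsMaltsevOp p)
    (R S : A → A → Prop) (hReq : Equivalence R) (hSeq : Equivalence S)
    (hRcomp : MaltsevCompat p R) (hScomp : MaltsevCompat p S) :
    ∀ x z : A, (∃ y, S x y ∧ R y z) ↔ (∃ y, R x y ∧ S y z) := fun x z =>
  ⟨hp.relationComp_le hReq.refl hSeq.refl hRcomp hScomp x z,
    hp.relationComp_le hSeq.refl hReq.refl hScomp hRcomp x z⟩
end

section
/- Let C be a finitely complete category. The following statements are equivalent: (1) every reflexive internal relation in C is an equivalence relation (i.e., C is a Mal'tsev category); (2) every reflexive internal relation in C is symmetric; (3) every reflexive internal relation in C is transitive; (4) every internal relation r : R ⟶ X ⨯ Y in C is difunctional; (5) every internal relation r : R ⟶ X ⨯ X in C is difunctional. -/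
/-!
Everything is argued with generalized elements `x, y : Z ⟶ X`, writing `x ~ y` when
`⟨x, y⟩` factors through `r`. For `r : R ⟶ X ⨯ Y`, the relation `T` on `R` given by
`a T b ⟺ r₁ a ~ r₂ b` is always reflexive, and `r` is difunctional exactly when `T` is
symmetric. So if reflexive relations are symmetric, every relation is difunctional; if they
are transitive, `T` is symmetric as well: a witness `c` of `a T b` satisfies `b T c` and
`c T a`. Conversely, difunctionality says `x ~ y, x' ~ y', x ~ y' ⟹ x' ~ y`; together with
reflexivity this gives symmetry (take `x ~ x, y ~ y, x ~ y`) and transitivity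
(take `y ~ z, x ~ y, y ~ y`).
-/

open CategoryTheory CategoryTheory.Limits

universe v u

variable {C : Type u} [Category.{v} C] [HasFiniteLimits C]

/-- An internal relation `r : R ⟶ X ⨯ X` is reflexive if the diagonal factors through it. -/
def IsReflexiveRel {R X : C} (r : R ⟶ X ⨯ X) : Prop :=
  ∃ d : X ⟶ R, d ≫ r = prod.lift (𝟙 X) (𝟙 X)

/-- An internal relation `r : R ⟶ X ⨯ X` is symmetric if its composite with the twist
isomorphism factors through it. -/
def IsSymmetricRel {R X : C} (r : R ⟶ X ⨯ X) : Prop :=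
  ∃ s : R ⟶ R, s ≫ r = r ≫ (prod.braiding X X).hom

/-- An internal relation `r : R ⟶ X ⨯ X` is transitive if, with `P` the pullback of the
second component of `r` along the first (the object of composable pairs, with projections
`q₁, q₂ : P ⟶ R`), the induced morphism `⟨r₁ ∘ q₁, r₂ ∘ q₂⟩ : P ⟶ X ⨯ X` factors
through `r`. -/
def IsTransitiveRel {R X : C} (r : R ⟶ X ⨯ X) : Prop :=
  ∃ t : pullback (r ≫ prod.snd) (r ≫ prod.fst) ⟶ R,
    t ≫ r = prod.lift
      (pullback.fst (r ≫ prod.snd) (r ≫ prod.fst) ≫ r ≫ prod.fst)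
      (pullback.snd (r ≫ prod.snd) (r ≫ prod.fst) ≫ r ≫ prod.snd)

/-- An internal relation `r : R ⟶ X ⨯ X` is an equivalence relation if it is
reflexive, symmetric and transitive. -/
def IsEquivalenceRel {R X : C} (r : R ⟶ X ⨯ X) : Prop :=
  IsReflexiveRel r ∧ IsSymmetricRel r ∧ IsTransitiveRel r

/-- An internal relation `r : R ⟶ X ⨯ Y` is difunctional if, with
`S` the pullback of `r` along `tw ∘ (r₂ ⨯ r₁) : R ⨯ R ⟶ X ⨯ Y` and
`T` the pullback of `r` along `(r₁ ⨯ r₂) : R ⨯ R ⟶ X ⨯ Y` (both subobjects of `R ⨯ R`),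
the canonical monomorphism `S ∩ T ⟶ T` is an isomorphism. -/
def IsDifunctional {R X Y : C} (r : R ⟶ X ⨯ Y) : Prop :=
  IsIso (pullback.snd
    (pullback.fst (prod.map (r ≫ prod.snd) (r ≫ prod.fst) ≫ (prod.braiding Y X).hom) r)
    (pullback.fst (prod.map (r ≫ prod.fst) (r ≫ prod.snd)) r))

attribute [local simp] prod.lift_fst prod.lift_snd prod.lift_fst_assoc prod.lift_snd_assoc
attribute [local simp] pullback.lift_fst pullback.lift_snd pullback.lift_fst_assoc
attribute [local simp] pullback.lift_snd_assoc

lemma isIso_pullback_snd_iff {S T Z : C} (u : S ⟶ Z) (v : T ⟶ Z) [Mono u] :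
    IsIso (pullback.snd u v) ↔ ∃ g : T ⟶ S, g ≫ u = v := by
  constructor
  · intro _
    exact ⟨inv (pullback.snd u v) ≫ pullback.fst u v, by simp [pullback.condition]⟩
  · rintro ⟨g, hg⟩
    have : IsSplitEpi (pullback.snd u v) :=
      ⟨⟨pullback.lift g (𝟙 T) (by simp [hg]), pullback.lift_snd _ _ _⟩⟩
    exact isIso_of_mono_of_isSplitEpi _

lemma exists_comp_pullback_fst_iff {A B R Z : C} (m : A ⟶ B) (r : R ⟶ B) (f : Z ⟶ A) :
    (∃ g : Z ⟶ pullback m r, g ≫ pullback.fst m r = f) ↔ ∃ c : Z ⟶ R, c ≫ r = f ≫ m := by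
  constructor
  · rintro ⟨g, rfl⟩
    exact ⟨g ≫ pullback.snd m r, by simp [pullback.condition]⟩
  · rintro ⟨c, hc⟩
    exact ⟨pullback.lift f c hc.symm, pullback.lift_fst _ _ _⟩

section Relates

variable {R X Y Z : C}

def Relates (r : R ⟶ X ⨯ Y) (x : Z ⟶ X) (y : Z ⟶ Y) : Prop :=
  ∃ c : Z ⟶ R, c ≫ r = prod.lift x y

lemma relates_comp_fst_comp_snd (r : R ⟶ X ⨯ Y) (c : Z ⟶ R) :
    Relates r (c ≫ r ≫ prod.fst) (c ≫ r ≫ prod.snd) :=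
  ⟨c, by ext <;> simp⟩

lemma Relates.precomp {r : R ⟶ X ⨯ Y} {x : Z ⟶ X} {y : Z ⟶ Y} (h : Relates r x y)
    {W : C} (f : W ⟶ Z) : Relates r (f ≫ x) (f ≫ y) := by
  obtain ⟨c, hc⟩ := h
  exact ⟨f ≫ c, by simp [hc]⟩

lemma isReflexiveRel_iff (r : R ⟶ X ⨯ X) :
    IsReflexiveRel r ↔ ∀ (Z : C) (x : Z ⟶ X), Relates r x x := by
  constructor
  · intro h Z x
    simpa using Relates.precomp h x
  · intro h
    exact h X (𝟙 X)

lemma isSymmetricRel_iff (r : R ⟶ X ⨯ X) :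
    IsSymmetricRel r ↔ ∀ (Z : C) (x y : Z ⟶ X), Relates r x y → Relates r y x := by
  constructor
  · rintro ⟨s, hs⟩ Z x y ⟨c, hc⟩
    exact ⟨c ≫ s, by simp [hs, reassoc_of% hc]⟩
  · intro h
    obtain ⟨s, hs⟩ := h R _ _ (relates_comp_fst_comp_snd r (𝟙 R))
    exact ⟨s, by ext <;> simp [hs]⟩

lemma isTransitiveRel_iff (r : R ⟶ X ⨯ X) :
    IsTransitiveRel r ↔
      ∀ (Z : C) (x y z : Z ⟶ X), Relates r x y → Relates r y z → Relates r x z := by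
  constructor
  · rintro ⟨t, ht⟩ Z x y z ⟨c, hc⟩ ⟨c', hc'⟩
    have hcc' : c ≫ r ≫ prod.snd = c' ≫ r ≫ prod.fst := by
      simp [reassoc_of% hc, reassoc_of% hc']
    exact ⟨pullback.lift c c' hcc' ≫ t,
      by ext <;> simp [ht, reassoc_of% hc, reassoc_of% hc']⟩
  · intro h
    obtain ⟨t, ht⟩ := h _ _ _ _ (relates_comp_fst_comp_snd r _)
      (pullback.condition (f := r ≫ prod.snd) (g := r ≫ prod.fst) ▸
        relates_comp_fst_comp_snd r (pullback.snd _ _))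
    exact ⟨t, ht⟩

end Relates

section CrossRel

variable {R X Y : C}

/-- The relation on `R` relating `a` to `b` when `r₁ a` is related to `r₂ b` by `r`. -/
noncomputable abbrev crossRel (r : R ⟶ X ⨯ Y) :
    pullback (prod.map (r ≫ prod.fst) (r ≫ prod.snd)) r ⟶ R ⨯ R :=
  pullback.fst _ _

lemma relates_crossRel_iff (r : R ⟶ X ⨯ Y) {Z : C} (a b : Z ⟶ R) :
    Relates (crossRel r) a b ↔ Relates r (a ≫ r ≫ prod.fst) (b ≫ r ≫ prod.snd) := by
  unfold Relates
  rw [exists_comp_pullback_fst_iff]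
  simp

lemma isReflexiveRel_crossRel (r : R ⟶ X ⨯ Y) : IsReflexiveRel (crossRel r) :=
  (isReflexiveRel_iff _).2 fun _ a =>
    (relates_crossRel_iff r a a).2 (relates_comp_fst_comp_snd r a)

lemma isDifunctional_iff_isSymmetricRel_crossRel (r : R ⟶ X ⨯ Y) [Mono r] :
    IsDifunctional r ↔ IsSymmetricRel (crossRel r) := by
  rw [IsDifunctional, isIso_pullback_snd_iff, IsSymmetricRel, exists_comp_pullback_fst_iff,
    exists_comp_pullback_fst_iff, Category.assoc]
  have hbraid : (prod.braiding R R).hom ≫ prod.map (r ≫ prod.fst) (r ≫ prod.snd) =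
      prod.map (r ≫ prod.snd) (r ≫ prod.fst) ≫ (prod.braiding Y X).hom := by
    ext <;> simp
  rw [hbraid]

lemma isSymmetricRel_crossRel_of_isTransitiveRel (r : R ⟶ X ⨯ Y)
    (h : IsTransitiveRel (crossRel r)) : IsSymmetricRel (crossRel r) := by
  rw [isTransitiveRel_iff] at h
  rw [isSymmetricRel_iff]
  intro Z a b hab
  obtain ⟨c, hc⟩ := (relates_crossRel_iff r a b).1 hab
  refine h Z b c a ((relates_crossRel_iff r _ _).2 ?_) ((relates_crossRel_iff r _ _).2 ?_)
  · simpa [reassoc_of% hc] using relates_comp_fst_comp_snd r b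
  · simpa [reassoc_of% hc] using relates_comp_fst_comp_snd r a

lemma IsDifunctional.relates {r : R ⟶ X ⨯ Y} [Mono r] (hr : IsDifunctional r) {Z : C}
    {x x' : Z ⟶ X} {y y' : Z ⟶ Y} (h : Relates r x y) (h' : Relates r x' y')
    (h'' : Relates r x y') : Relates r x' y := by
  obtain ⟨a, ha⟩ := h
  obtain ⟨b, hb⟩ := h'
  have hab : Relates (crossRel r) a b :=
    (relates_crossRel_iff r a b).2 (by simpa [reassoc_of% ha, reassoc_of% hb] using h'')
  have hba := ((isSymmetricRel_iff _).1
    ((isDifunctional_iff_isSymmetricRel_crossRel r).1 hr) Z a b hab)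
  simpa [reassoc_of% ha, reassoc_of% hb] using (relates_crossRel_iff r b a).1 hba

end CrossRel

lemma IsDifunctional.isEquivalenceRel {R X : C} {r : R ⟶ X ⨯ X} [Mono r]
    (hd : IsDifunctional r) (hr : IsReflexiveRel r) : IsEquivalenceRel r := by
  rw [isReflexiveRel_iff] at hr
  refine ⟨(isReflexiveRel_iff r).2 hr, (isSymmetricRel_iff r).2 ?_, (isTransitiveRel_iff r).2 ?_⟩
  · exact fun Z x y hxy => hd.relates (hr Z x) (hr Z y) hxy
  · exact fun Z x y z hxy hyz => hd.relates hyz hxy (hr Z y)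

/-- Characterisations of Mal'tsev categories among finitely complete categories:
every reflexive relation is an equivalence relation iff every reflexive relation is
symmetric iff every reflexive relation is transitive iff every relation
`R ⟶ X ⨯ Y` is difunctional iff every relation `R ⟶ X ⨯ X` is difunctional. -/
theorem stmt_3 :
    List.TFAE
      [∀ (R X : C) (r : R ⟶ X ⨯ X), Mono r → IsReflexiveRel r → IsEquivalenceRel r,
       ∀ (R X : C) (r : R ⟶ X ⨯ X), Mono r → IsReflexiveRel r → IsSymmetricRel r,
       ∀ (R X : C) (r : R ⟶ X ⨯ X), Mono r → IsReflexiveRel r → IsTransitiveRel r,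
       ∀ (R X Y : C) (r : R ⟶ X ⨯ Y), Mono r → IsDifunctional r,
       ∀ (R X : C) (r : R ⟶ X ⨯ X), Mono r → IsDifunctional r] := by
  tfae_have 1 → 2 := fun h R X r hm hr => (h R X r hm hr).2.1
  tfae_have 1 → 3 := fun h R X r hm hr => (h R X r hm hr).2.2
  tfae_have 2 → 4 := fun h R X Y r _ => (isDifunctional_iff_isSymmetricRel_crossRel r).2
    (h _ _ _ inferInstance (isReflexiveRel_crossRel r))
  tfae_have 3 → 4 := fun h R X Y r _ => (isDifunctional_iff_isSymmetricRel_crossRel r).2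
    (isSymmetricRel_crossRel_of_isTransitiveRel r
      (h _ _ _ inferInstance (isReflexiveRel_crossRel r)))
  tfae_have 4 → 5 := fun h R X r hm => h R X X r hm
  tfae_have 5 → 1 := fun h R X r hm hr => (h R X r hm).isEquivalenceRel hr
  tfae_finish
end

section
/- Let X, Y, Z, U, V, W be types, each equipped with a Mal'tsev operation, and let f : X → Y, g : Z → Y, h : U → V, k : W → V, p : X → U, q : Z → W, r : Y → V, g' : Y → Z, k' : V → W be maps, all of which commute with the Mal'tsev operations (i.e., each map φ satisfies φ (p₁ a b c) = p₂ (φ a) (φ b) (φ c) where p₁, p₂ are the operations on its domain and codomain). Assume g ∘ g' = id, k ∘ k' = id, h ∘ p = r ∘ f, k ∘ q = r ∘ g, q ∘ g' = k' ∘ r, and that p and q are surjective. Then the comparison map between pullbacks is surjective: for every u in U and w in W with h u = k w, there exist x in X and z in Z such that f x = g z, p x = u and q z = w. -/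
/-- A map `φ : A → B` commutes with Mal'tsev operations `pA` on `A` and `pB` on `B`. -/
def MaltsevHom {A B : Type*} (pA : A → A → A → A) (pB : B → B → B → B)
    (φ : A → B) : Prop :=
  ∀ a b c, φ (pA a b c) = pB (φ a) (φ b) (φ c)

section

variable {Y Z W V : Type*} {pY : Y → Y → Y → Y} {pZ : Z → Z → Z → Z} {pW : W → W → W → W}
  {g : Z → Y} {g' : Y → Z}

theorem MaltsevHom.apply_shift_along_section (hY : IsMaltsevOp pY) (hg : MaltsevHom pZ pY g)
    (hgg' : ∀ y, g (g' y) = y) (z : Z) (y : Y) : g (pZ z (g' (g z)) (g' y)) = y := by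
  rw [hg, hgg', hY.2, hgg']

theorem MaltsevHom.apply_shift_along_section_of_eq (hW : IsMaltsevOp pW)
    {q : Z → W} {r : Y → V} {k' : V → W} (hq : MaltsevHom pZ pW q)
    (hqg' : ∀ y, q (g' y) = k' (r y)) {z : Z} {y : Y} (hy : r y = r (g z)) :
    q (pZ z (g' (g z)) (g' y)) = q z := by
  rw [hq, hqg', hqg', hy, hW.1]

end

theorem stmt_8_general {X Y Z U V W : Type*}
    (pY : Y → Y → Y → Y) (pZ : Z → Z → Z → Z)
    (pW : W → W → W → W)
    (hY : IsMaltsevOp pY)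
    (hW : IsMaltsevOp pW)
    (f : X → Y) (g : Z → Y) (h : U → V) (k : W → V)
    (p : X → U) (q : Z → W) (r : Y → V) (g' : Y → Z) (k' : V → W)
    (hg : MaltsevHom pZ pY g)
    (hq : MaltsevHom pZ pW q)
    (hgg' : ∀ y, g (g' y) = y)
    (hhp : ∀ x, h (p x) = r (f x)) (hkq : ∀ z, k (q z) = r (g z))
    (hqg' : ∀ y, q (g' y) = k' (r y))
    (hpsurj : Function.Surjective p) (hqsurj : Function.Surjective q) :
    ∀ (u : U) (w : W), h u = k w →
      ∃ (x : X) (z : Z), f x = g z ∧ p x = u ∧ q z = w := by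
  intro u w huw
  obtain ⟨x, rfl⟩ := hpsurj u
  obtain ⟨z, rfl⟩ := hqsurj w
  have hfx : r (f x) = r (g z) := by rw [← hhp, huw, hkq]
  exact ⟨x, pZ z (g' (g z)) (g' (f x)), (hg.apply_shift_along_section hY hgg' z (f x)).symm, rfl,
    hq.apply_shift_along_section_of_eq hW hqg' hfx⟩

/-- In a commutative cube of types with Mal'tsev operations, where the left and right
faces are pullbacks, the downward maps `g, k` are split epimorphisms with sections
`g', k'`, and `p, q` are surjective, the comparison map between the pullbacks is
surjective. -/
theorem stmt_8 {X Y Z U V W : Type*}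
    (pX : X → X → X → X) (pY : Y → Y → Y → Y) (pZ : Z → Z → Z → Z)
    (pU : U → U → U → U) (pV : V → V → V → V) (pW : W → W → W → W)
    (hX : IsMaltsevOp pX) (hY : IsMaltsevOp pY) (hZ : IsMaltsevOp pZ)
    (hU : IsMaltsevOp pU) (hV : IsMaltsevOp pV) (hW : IsMaltsevOp pW)
    (f : X → Y) (g : Z → Y) (h : U → V) (k : W → V)
    (p : X → U) (q : Z → W) (r : Y → V) (g' : Y → Z) (k' : V → W)
    (hf : MaltsevHom pX pY f) (hg : MaltsevHom pZ pY g) (hh : MaltsevHom pU pV h)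
    (hk : MaltsevHom pW pV k) (hp : MaltsevHom pX pU p) (hq : MaltsevHom pZ pW q)
    (hr : MaltsevHom pY pV r) (hg' : MaltsevHom pY pZ g') (hk' : MaltsevHom pV pW k')
    (hgg' : ∀ y, g (g' y) = y) (hkk' : ∀ v, k (k' v) = v)
    (hhp : ∀ x, h (p x) = r (f x)) (hkq : ∀ z, k (q z) = r (g z))
    (hqg' : ∀ y, q (g' y) = k' (r y))
    (hpsurj : Function.Surjective p) (hqsurj : Function.Surjective q) :
    ∀ (u : U) (w : W), h u = k w →
      ∃ (x : X) (z : Z), f x = g z ∧ p x = u ∧ q z = w :=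
  stmt_8_general pY pZ pW hY hW f g h k p q r g' k' hg hq hgg' hhp hkq hqg' hpsurj hqsurj
end
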